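/- arXiv:1911.02540 — 5 statements merged into one kernel-verified Lean document; each statement's English description precedes it below -/
import Mathlib

section
/- Let S ⊆ ℕ be a finite set with 0 ∈ S and |S| = k ≥ 2. Then z_S ≤ 1/4 + (2/π)·(√(k−1) − 1); in particular z_S ≤ (2/π)·√(k−1). -/
open Real Finset

/-- `g_S(t) = ∑_{e ∈ S} t^(2e)`. -/
noncomputable def gS (S : Finset ℕ) (t : ℝ) : ℝ := ∑ e ∈ S, t ^ (2 * e)

/-- `h_S(t) = ∑_{e ∈ S} e² t^(2e-2)` (the term for `e = 0` being `0`). -/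
noncomputable def hS (S : Finset ℕ) (t : ℝ) : ℝ := ∑ e ∈ S, (e : ℝ) ^ 2 * t ^ (2 * e - 2)

/-- `q_S(t) = ∑_{e ∈ S} e t^(2e-1)` (the term for `e = 0` being `0`). -/
noncomputable def qS (S : Finset ℕ) (t : ℝ) : ℝ := ∑ e ∈ S, (e : ℝ) * t ^ (2 * e - 1)

/-- `E_S(t) = g_S(t) h_S(t) - q_S(t)²`. -/
noncomputable def ES (S : Finset ℕ) (t : ℝ) : ℝ := gS S t * hS S t - qS S t ^ 2

/-- The expected number of real zeros in `(0,1)`, given by the Edelman–Kostlan integral. -/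
noncomputable def zS (S : Finset ℕ) : ℝ :=
  (1 / Real.pi) * ∫ t in (0 : ℝ)..1, Real.sqrt (ES S t) / gS S t

/-!
Let `a` be the largest exponent of `S` and `B = S \ {a}`. With the moments
`A_j(t) = ∑_{e ∈ S} e^j t^(2e)` one has `t² E_S = g_S A₂ - A₁²`, and adding `a` to `B`
gives `g_B · t² E_S = t^(2a) (a g_B - A₁,B)² + t² E_B · g_S`. Hence pointwise
`√E_S / g_S ≤ φ' + √E_B / g_B` with `φ(t) = arctan (t^a / √g_B(t))`, and integrating over
`[0, 1]` each removed exponent costs at most `φ 1 - φ 0 = arctan (1 / √|B|)`. So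
`π z_S ≤ ∑_{j=1}^{k-1} arctan (1 / √j)`, which is at most `π/4 + 2 (√(k-1) - 1)` since
`arctan (1 / √j) ≤ 1 / √j ≤ 2 (√j - √(j-1))`.
-/

noncomputable def moment (S : Finset ℕ) (j : ℕ) (t : ℝ) : ℝ :=
  ∑ e ∈ S, (e : ℝ) ^ j * t ^ (2 * e)

noncomputable def ekDensity (S : Finset ℕ) (t : ℝ) : ℝ := √(ES S t) / gS S t

section Algebra

variable (S : Finset ℕ) (t : ℝ)

lemma sq_mul_hS : t ^ 2 * hS S t = moment S 2 t := by
  simp only [hS, moment, mul_sum]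
  refine sum_congr rfl fun e _ => ?_
  rcases Nat.eq_zero_or_pos e with rfl | he
  · simp
  · rw [mul_left_comm, ← pow_add, Nat.add_sub_cancel' (by omega)]

lemma mul_qS : t * qS S t = moment S 1 t := by
  simp only [qS, moment, mul_sum, pow_one]
  refine sum_congr rfl fun e _ => ?_
  rcases Nat.eq_zero_or_pos e with rfl | he
  · simp
  · rw [mul_left_comm, ← pow_succ', Nat.sub_add_cancel (by omega)]

lemma sq_mul_ES : t ^ 2 * ES S t = gS S t * moment S 2 t - moment S 1 t ^ 2 := by
  rw [ES, ← sq_mul_hS, ← mul_qS]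
  ring

lemma moment_one_sq_le : moment S 1 t ^ 2 ≤ gS S t * moment S 2 t := by
  have hsq (e : ℕ) : t ^ (2 * e) = (t ^ e) ^ 2 := by rw [← pow_mul, mul_comm]
  have h0 : gS S t = ∑ e ∈ S, (t ^ e) ^ 2 := sum_congr rfl fun e _ => hsq e
  have h1 : moment S 1 t = ∑ e ∈ S, t ^ e * (e * t ^ e) :=
    sum_congr rfl fun e _ => by rw [hsq]; ring
  have h2 : moment S 2 t = ∑ e ∈ S, (e * t ^ e) ^ 2 :=
    sum_congr rfl fun e _ => by rw [hsq]; ring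
  rw [h0, h1, h2]
  exact sum_mul_sq_le_sq_mul_sq S _ _

lemma ES_nonneg {t : ℝ} (ht : t ≠ 0) : 0 ≤ ES S t := by
  have h := sq_mul_ES S t ▸ sub_nonneg.2 (moment_one_sq_le S t)
  exact (mul_nonneg_iff_of_pos_left (by positivity)).1 h

variable {S}

lemma one_le_gS (h0 : 0 ∈ S) : 1 ≤ gS S t := by
  simpa [gS] using
    single_le_sum (f := fun e => t ^ (2 * e)) (fun e _ => (even_two_mul e).pow_nonneg t) h0

lemma gS_one : gS S 1 = #S := by
  simp [gS]

lemma moment_one_le_mul_gS {a : ℕ} (ha : ∀ e ∈ S, e < a) : moment S 1 t ≤ a * gS S t := by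
  rw [moment, gS, mul_sum]
  refine sum_le_sum fun e he => ?_
  have : (e : ℝ) ≤ a := by exact_mod_cast (ha e he).le
  rw [pow_one]
  exact mul_le_mul_of_nonneg_right this ((even_two_mul e).pow_nonneg t)

lemma gS_insert {a : ℕ} (ha : a ∉ S) : gS (insert a S) t = t ^ (2 * a) + gS S t :=
  sum_insert ha

lemma moment_insert {a : ℕ} (ha : a ∉ S) (j : ℕ) :
    moment (insert a S) j t = a ^ j * t ^ (2 * a) + moment S j t :=
  sum_insert ha

lemma gS_mul_sq_mul_ES_insert {a : ℕ} (ha : a ∉ S) :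
    gS S t * (t ^ 2 * ES (insert a S) t) =
      t ^ (2 * a) * (a * gS S t - moment S 1 t) ^ 2 + t ^ 2 * ES S t * gS (insert a S) t := by
  simp only [sq_mul_ES, gS_insert t ha, moment_insert t ha]
  ring

end Algebra

lemma sqrt_div_le_of_mul_eq {g G E E' u : ℝ} (hg : 0 < g) (hgG : g ≤ G) (hE : 0 ≤ E)
    (hu : 0 ≤ u) (h : g * E' = u ^ 2 + E * G) : √E' / G ≤ u / (√g * G) + √E / g := by
  have hG : 0 < G := hg.trans_le hgG
  set x := u / √g with hx
  set y := √E * G / g with hy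
  have hE' : E' = x ^ 2 + E * G / g := by
    rw [div_pow, sq_sqrt hg.le, ← add_div, eq_div_iff hg.ne', ← h, mul_comm]
  have hEy : E * G / g ≤ y ^ 2 := by
    rw [div_pow, mul_pow, sq_sqrt hE, div_le_div_iff₀ hg (by positivity)]
    nlinarith [mul_nonneg (mul_nonneg hE hG.le) hg.le]
  have hxy : E' ≤ (x + y) ^ 2 := by
    nlinarith [mul_nonneg (by positivity : 0 ≤ x) (by positivity : 0 ≤ y)]
  calc √E' / G ≤ (x + y) / G := by
        gcongr
        exact sqrt_le_iff.2 ⟨by positivity, hxy⟩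
    _ = u / (√g * G) + √E / g := by
        rw [hx, hy]
        field_simp

lemma ekDensity_insert_le {S : Finset ℕ} {a : ℕ} (h0 : 0 ∈ S) (ha : ∀ e ∈ S, e < a)
    {t : ℝ} (ht : 0 < t) :
    ekDensity (insert a S) t ≤
      t ^ (a - 1) * (a * gS S t - moment S 1 t) / (√(gS S t) * (gS S t + t ^ (2 * a))) +
        ekDensity S t := by
  have haS : a ∉ S := fun h => lt_irrefl a (ha a h)
  have ha0 : a ≠ 0 := (Nat.zero_le _).trans_lt (ha 0 h0) |>.ne'
  have hG : gS (insert a S) t = gS S t + t ^ (2 * a) := by rw [gS_insert t haS, add_comm]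
  have ht2a : t ^ (2 * a) = t ^ 2 * (t ^ (a - 1)) ^ 2 := by
    rw [← pow_mul, ← pow_add]; congr 1; omega
  have key := gS_mul_sq_mul_ES_insert t haS
  rw [hG] at key
  rw [ekDensity, ekDensity, hG]
  refine sqrt_div_le_of_mul_eq (one_pos.trans_le (one_le_gS t h0))
    (le_add_of_nonneg_right ((even_two_mul a).pow_nonneg t)) (ES_nonneg S ht.ne')
    (mul_nonneg (by positivity) (sub_nonneg.2 (moment_one_le_mul_gS t ha))) ?_
  exact mul_left_cancel₀ (pow_ne_zero 2 ht.ne')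
    (by linear_combination key + (a * gS S t - moment S 1 t) ^ 2 * ht2a)

lemma hasDerivAt_gS (S : Finset ℕ) (t : ℝ) : HasDerivAt (gS S) (2 * qS S t) t := by
  have h : HasDerivAt (fun u => ∑ e ∈ S, u ^ (2 * e))
      (∑ e ∈ S, ((2 * e : ℕ) : ℝ) * t ^ (2 * e - 1)) t :=
    HasDerivAt.fun_sum fun e _ => hasDerivAt_pow (2 * e) t
  refine h.congr_deriv ?_
  rw [qS, mul_sum]
  push_cast
  exact sum_congr rfl fun e _ => by ring

lemma hasDerivAt_arctan_pow_div_sqrt_gS {S : Finset ℕ} {a : ℕ} (h0 : 0 ∈ S) (ha : a ≠ 0)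
    (t : ℝ) :
    HasDerivAt (fun u => arctan (u ^ a / √(gS S u)))
      (t ^ (a - 1) * (a * gS S t - moment S 1 t) / (√(gS S t) * (gS S t + t ^ (2 * a)))) t := by
  have hg : 0 < gS S t := one_pos.trans_le (one_le_gS t h0)
  have hs : 0 < √(gS S t) := sqrt_pos.2 hg
  have h := ((hasDerivAt_pow a t).fun_div ((hasDerivAt_gS S t).sqrt hg.ne') hs.ne').arctan
  convert h using 1
  have hta : t ^ a = t ^ (a - 1) * t := by rw [← pow_succ, Nat.sub_add_cancel (by omega)]
  have ht2a : t ^ (2 * a) = (t ^ a) ^ 2 := by rw [← pow_mul, mul_comm]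
  rw [← mul_qS, ht2a, hta]
  field_simp
  rw [sq_sqrt hg.le]
  ring

lemma continuous_ekDensity {S : Finset ℕ} (h0 : 0 ∈ S) : Continuous (ekDensity S) := by
  have hg : Continuous (gS S) := by unfold gS; fun_prop
  have hE : Continuous (ES S) := by unfold ES gS hS qS; fun_prop
  exact (continuous_sqrt.comp hE).div hg fun t => (one_pos.trans_le (one_le_gS t h0)).ne'

lemma integral_ekDensity_insert_le {S : Finset ℕ} {a : ℕ} (h0 : 0 ∈ S)
    (ha : ∀ e ∈ S, e < a) :
    ∫ t in (0 : ℝ)..1, ekDensity (insert a S) t ≤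
      arctan (1 / √(#S)) + ∫ t in (0 : ℝ)..1, ekDensity S t := by
  have ha0 : a ≠ 0 := (Nat.zero_le _).trans_lt (ha 0 h0) |>.ne'
  have hderiv := hasDerivAt_arctan_pow_div_sqrt_gS h0 ha0
  have hc := continuous_ekDensity h0
  have hc' := continuous_ekDensity (mem_insert_of_mem (b := a) h0)
  have h := intervalIntegral.integral_le_sub_of_hasDeriv_right_of_le zero_le_one
    (fun t _ => (hderiv t).continuousAt.continuousWithinAt)
    (fun t _ => (hderiv t).hasDerivWithinAt) (hc'.sub hc).integrableOn_Icc
    (fun t ht => sub_le_iff_le_add.2 (ekDensity_insert_le h0 ha ht.1))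
  rw [Pi.sub_def, intervalIntegral.integral_sub (hc'.intervalIntegrable 0 1)
    (hc.intervalIntegrable 0 1)] at h
  simpa [gS_one, ha0] using h

lemma integral_ekDensity_le {S : Finset ℕ} (h0 : 0 ∈ S) :
    ∫ t in (0 : ℝ)..1, ekDensity S t ≤ ∑ j ∈ Ico 1 #S, arctan (1 / √j) := by
  induction S using Finset.induction_on_max with
  | empty => simp at h0
  | insert a S ha ih =>
    rcases S.eq_empty_or_nonempty with rfl | hne
    · obtain rfl : 0 = a := by simpa using h0
      simp [ekDensity, ES, hS, qS]
    have hS0 : 0 ∈ S := (mem_insert.1 h0).resolve_left fun h => by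
      have := ha _ hne.choose_spec
      omega
    rw [card_insert_of_notMem fun h => lt_irrefl a (ha a h),
      sum_Ico_succ_top (card_pos.2 hne)]
    linarith [integral_ekDensity_insert_le hS0 ha, ih hS0]

lemma arctan_le_self {x : ℝ} (hx : 0 ≤ x) : arctan x ≤ x := by
  simpa [tan_arctan] using le_tan (arctan_nonneg.2 hx) (arctan_lt_pi_div_two x)

lemma one_div_sqrt_le_two_mul_sub_sqrt {x : ℝ} (hx : 1 ≤ x) :
    1 / √x ≤ 2 * (√x - √(x - 1)) := by
  have hs : 0 < √x := sqrt_pos.2 (by linarith)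
  have hx2 : √x ^ 2 = x := sq_sqrt (by linarith)
  have hy2 : √(x - 1) ^ 2 = x - 1 := sq_sqrt (by linarith)
  rw [div_le_iff₀ hs]
  nlinarith [sq_nonneg (√x - √(x - 1))]

lemma sum_Ico_arctan_one_div_sqrt_le {n : ℕ} (hn : 2 ≤ n) :
    ∑ j ∈ Ico 1 n, arctan (1 / √j) ≤ π / 4 + 2 * (√((n : ℝ) - 1) - 1) := by
  induction n, hn using Nat.le_induction with
  | base => norm_num [arctan_one]
  | succ n hn ih =>
    rw [sum_Ico_succ_top (by omega)]
    have hn1 : (1 : ℝ) ≤ n := by exact_mod_cast (by omega : 1 ≤ n)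
    have h1 := arctan_le_self (by positivity : (0 : ℝ) ≤ 1 / √n)
    have h2 := one_div_sqrt_le_two_mul_sub_sqrt hn1
    push_cast
    rw [add_sub_cancel_right]
    linarith

theorem stmt0 (S : Finset ℕ) (k : ℕ) (h0 : 0 ∈ S) (hcard : S.card = k) (hk : 2 ≤ k) :
    zS S ≤ 1 / 4 + (2 / Real.pi) * (Real.sqrt ((k : ℝ) - 1) - 1) ∧
    zS S ≤ (2 / Real.pi) * Real.sqrt ((k : ℝ) - 1) := by
  have hI : ∫ t in (0 : ℝ)..1, ekDensity S t ≤ π / 4 + 2 * (√((k : ℝ) - 1) - 1) := by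
    subst hcard
    exact (integral_ekDensity_le h0).trans (sum_Ico_arctan_one_div_sqrt_le hk)
  have h1 : zS S ≤ 1 / 4 + (2 / π) * (√((k : ℝ) - 1) - 1) :=
    calc zS S ≤ (1 / π) * (π / 4 + 2 * (√((k : ℝ) - 1) - 1)) :=
          mul_le_mul_of_nonneg_left hI (by positivity)
      _ = 1 / 4 + (2 / π) * (√((k : ℝ) - 1) - 1) := by field_simp
  have h2 : (1 : ℝ) / 4 ≤ 2 / π := by
    rw [div_le_div_iff₀ (by norm_num) pi_pos]
    linarith [pi_le_four]
  exact ⟨h1, by linarith⟩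
end

section
/- Let S ⊆ ℕ be a finite nonempty set. Then for every t > 0, 𝓘(g_S)(t) = 4·E_S(t)/g_S(t)²; equivalently, 4·E_S(t) = g_S(t)·(deriv (deriv g_S)) t + g_S(t)·(deriv g_S t)/t − (deriv g_S t)². -/
open Real Finset

/-- `𝓘(g)(t) = (g'/g)'(t) + g'(t)/(t·g(t))`. -/
noncomputable def IEK (g : ℝ → ℝ) (t : ℝ) : ℝ :=
  deriv (fun s => deriv g s / g s) t + deriv g t / (t * g t)

/-! Termwise differentiation gives `g_S' = 2 q_S` and `g_S'' = 4 h_S - 2 q_S / t`, so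
`g g'' + g g' / t - g'² = 4 (g h - q²)`; the quotient rule writes `𝓘(g)` as that expression
divided by `g²`. -/

lemma IEK_eq_div_sq {g : ℝ → ℝ} {t : ℝ} (hg : DifferentiableAt ℝ g t)
    (hg' : DifferentiableAt ℝ (deriv g) t) (hgt : g t ≠ 0) :
    IEK g t = (g t * deriv (deriv g) t + g t * deriv g t / t - deriv g t ^ 2) / g t ^ 2 := by
  rw [IEK, deriv_fun_div hg' hg hgt]
  rcases eq_or_ne t 0 with rfl | ht
  · simp only [zero_mul, div_zero, add_zero]
    ring
  · field_simp
    ring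

lemma gS_pos (S : Finset ℕ) (hS : S.Nonempty) {t : ℝ} (ht : 0 < t) : 0 < gS S t :=
  Finset.sum_pos (fun _ _ => by positivity) hS

lemma deriv_gS (S : Finset ℕ) : deriv (gS S) = fun t => 2 * qS S t :=
  funext fun t => (hasDerivAt_gS S t).deriv

lemma hasDerivAt_qS (S : Finset ℕ) {t : ℝ} (ht : t ≠ 0) :
    HasDerivAt (qS S) (2 * hS S t - qS S t / t) t := by
  refine (HasDerivAt.fun_sum fun e (_ : e ∈ S) =>
    (hasDerivAt_pow (2 * e - 1) t).const_mul (e : ℝ)).congr_deriv ?_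
  rw [hS, qS, Finset.mul_sum, Finset.sum_div, ← Finset.sum_sub_distrib]
  refine Finset.sum_congr rfl fun e _ => ?_
  rcases e with _ | m
  · simp
  · rw [show 2 * (m + 1) - 1 = 2 * m + 1 by omega, show 2 * (m + 1) - 2 = 2 * m by omega,
      Nat.add_sub_cancel]
    field_simp
    push_cast
    ring

lemma deriv_deriv_gS (S : Finset ℕ) {t : ℝ} (ht : t ≠ 0) :
    deriv (deriv (gS S)) t = 4 * hS S t - 2 * qS S t / t := by
  rw [deriv_gS, ((hasDerivAt_qS S ht).const_mul 2).deriv]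
  ring

lemma four_mul_ES (S : Finset ℕ) {t : ℝ} (ht : t ≠ 0) :
    4 * ES S t = gS S t * deriv (deriv (gS S)) t + gS S t * deriv (gS S) t / t
      - deriv (gS S) t ^ 2 := by
  rw [deriv_deriv_gS S ht, deriv_gS, ES]
  field_simp
  ring

theorem stmt4 (S : Finset ℕ) (hS : S.Nonempty) (t : ℝ) (ht : 0 < t) :
    IEK (gS S) t = 4 * ES S t / (gS S t) ^ 2 ∧
    4 * ES S t =
      gS S t * deriv (deriv (gS S)) t + gS S t * deriv (gS S) t / t
        - (deriv (gS S) t) ^ 2 := by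
  have hE := four_mul_ES S ht.ne'
  refine ⟨?_, hE⟩
  have hdiff' : DifferentiableAt ℝ (deriv (gS S)) t := by
    rw [deriv_gS]
    exact ((hasDerivAt_qS S ht.ne').const_mul 2).differentiableAt
  rw [IEK_eq_div_sq (hasDerivAt_gS S t).differentiableAt hdiff' (gS_pos S hS ht).ne', hE]
end

section
/- Let S ⊆ ℕ be a finite set with 0 ∈ S and |S| = k, let M = max S, and let b ≥ 1 be a real number. Then ∫_{1−1/b}^{1} 2·√(E_S(t))/g_S(t) dt ≤ 2(k+1)·M/b. (The integrand here equals √(𝓘(g_S)(t)).) -/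
open Real Finset

lemma gS_ge_one (S : Finset ℕ) (h0 : 0 ∈ S) (t : ℝ) : 1 ≤ gS S t := by
  unfold gS
  have h := Finset.single_le_sum (f := fun e => t ^ (2 * e))
    (fun e _ => by show (0:ℝ) ≤ t ^ (2 * e); rw [pow_mul]; exact pow_nonneg (sq_nonneg t) e) h0
  simpa using h

lemma pointwise_bound (S : Finset ℕ) (k : ℕ) (h0 : 0 ∈ S) (hcard : S.card = k)
    (t : ℝ) (ht0 : 0 ≤ t) (ht1 : t ≤ 1) :
    2 * Real.sqrt (ES S t) / gS S t ≤
      2 * ((k : ℝ) + 1) * (S.max' ⟨0, h0⟩ : ℝ) := by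
  set M : ℕ := S.max' ⟨0, h0⟩ with hM
  have hg1 : 1 ≤ gS S t := gS_ge_one S h0 t
  have hgpos : 0 < gS S t := lt_of_lt_of_le one_pos hg1
  have hM0 : (0 : ℝ) ≤ (M : ℝ) := Nat.cast_nonneg _
  have hh : hS S t ≤ (k : ℝ) * (M : ℝ) ^ 2 := by
    unfold hS
    calc ∑ e ∈ S, (e : ℝ) ^ 2 * t ^ (2 * e - 2)
        ≤ ∑ _e ∈ S, (M : ℝ) ^ 2 := by
          apply Finset.sum_le_sum
          intro e he
          have he2 : (e : ℝ) ^ 2 ≤ (M : ℝ) ^ 2 := by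
            have : (e : ℝ) ≤ (M : ℝ) := by
              exact_mod_cast S.le_max' e he
            nlinarith [Nat.cast_nonneg (α := ℝ) e]
          have htp : t ^ (2 * e - 2) ≤ 1 := pow_le_one₀ ht0 ht1
          have htp0 : 0 ≤ t ^ (2 * e - 2) := pow_nonneg ht0 _
          calc (e : ℝ) ^ 2 * t ^ (2 * e - 2) ≤ (M : ℝ) ^ 2 * 1 :=
                mul_le_mul he2 htp htp0 (sq_nonneg _)
            _ = (M : ℝ) ^ 2 := mul_one _
      _ = (k : ℝ) * (M : ℝ) ^ 2 := by
          rw [Finset.sum_const, nsmul_eq_mul, hcard]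
  have h1 : Real.sqrt (ES S t) ≤ gS S t * (((k : ℝ) + 1) * (M : ℝ)) := by
    have hsq : ES S t ≤ (gS S t * (((k : ℝ) + 1) * (M : ℝ))) ^ 2 := by
      have hq2 : 0 ≤ qS S t ^ 2 := sq_nonneg _
      have hgh : gS S t * hS S t ≤ gS S t * ((k : ℝ) * (M : ℝ) ^ 2) :=
        mul_le_mul_of_nonneg_left hh (le_of_lt hgpos)
      have h4 : gS S t * (k : ℝ) ≤ gS S t ^ 2 * ((k : ℝ) + 1) ^ 2 := by
        nlinarith [mul_nonneg (mul_nonneg (sub_nonneg.mpr hg1) hgpos.le)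
            (sq_nonneg ((k : ℝ) + 1)),
          mul_nonneg hgpos.le (sq_nonneg (k : ℝ)),
          mul_nonneg hgpos.le (Nat.cast_nonneg (α := ℝ) k), hgpos.le]
      have h5 := mul_le_mul_of_nonneg_right h4 (sq_nonneg (M : ℝ))
      unfold ES
      nlinarith [hq2, hgh, h5]
    calc Real.sqrt (ES S t) ≤ Real.sqrt ((gS S t * (((k : ℝ) + 1) * (M : ℝ))) ^ 2) :=
          Real.sqrt_le_sqrt hsq
      _ = gS S t * (((k : ℝ) + 1) * (M : ℝ)) := Real.sqrt_sq (by positivity)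
  rw [div_le_iff₀ hgpos]
  nlinarith
theorem stmt13 (S : Finset ℕ) (k : ℕ) (h0 : 0 ∈ S) (hcard : S.card = k)
    (b : ℝ) (hb : 1 ≤ b) :
    ∫ t in (1 - 1 / b : ℝ)..1, 2 * Real.sqrt (ES S t) / gS S t ≤
      2 * ((k : ℝ) + 1) * (S.max' ⟨0, h0⟩ : ℝ) / b := by
  have hb0 : (0 : ℝ) < b := lt_of_lt_of_le one_pos hb
  have hib : 1 / b ≤ 1 := by rw [div_le_one hb0]; exact hb
  have hib0 : (0 : ℝ) ≤ 1 / b := by positivity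
  have ha : (0 : ℝ) ≤ 1 - 1 / b := by linarith
  have hg : Continuous (gS S) := by
    unfold gS; exact continuous_finset_sum _ fun e _ => continuous_pow _
  have hh : Continuous (hS S) := by
    unfold hS; exact continuous_finset_sum _ fun e _ => continuous_const.mul (continuous_pow _)
  have hq : Continuous (qS S) := by
    unfold qS; exact continuous_finset_sum _ fun e _ => continuous_const.mul (continuous_pow _)
  have hE : Continuous (ES S) := by unfold ES; exact (hg.mul hh).sub (hq.pow 2)
  have hcont : Continuous fun t => 2 * Real.sqrt (ES S t) / gS S t := by
    apply Continuous.div (continuous_const.mul (Real.continuous_sqrt.comp hE)) hg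
    intro t
    have := gS_ge_one S h0 t
    linarith
  have key : ∫ t in (1 - 1 / b : ℝ)..1, 2 * Real.sqrt (ES S t) / gS S t ≤
      ∫ _t in (1 - 1 / b : ℝ)..1, (2 * ((k : ℝ) + 1) * (S.max' ⟨0, h0⟩ : ℝ)) := by
    apply intervalIntegral.integral_mono_on (by linarith)
      (hcont.intervalIntegrable _ _) intervalIntegrable_const
    intro t ht
    exact pointwise_bound S k h0 hcard t (le_trans ha ht.1) ht.2
  rw [intervalIntegral.integral_const, smul_eq_mul] at key
  have heq : (1 - (1 - 1 / b)) * (2 * ((k : ℝ) + 1) * (S.max' ⟨0, h0⟩ : ℝ)) =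
      2 * ((k : ℝ) + 1) * (S.max' ⟨0, h0⟩ : ℝ) / b := by ring
  linarith [key, heq.le]
end

section
/- There exists K ∈ ℕ such that for all k ≥ K the following holds: with S = {0, 1} ∪ {2^(2^i) : 1 ≤ i ≤ k−1} and a = 2^(2^k), one has ∑_{e ∈ S} (1 − 1/(2a))^{2e} ≥ k, i.e., g_S(1 − 1/(2a)) ≥ k. -/
open Real Finset

/-!
By Bernoulli's inequality each term satisfies `t^(2e) ≥ 1 - 2e(1 - t)`, so
`g_S(t) ≥ |S| - 2(1 - t) ∑_{e ∈ S} e`. At `t = 1 - 1/(2a)` the error term is `(∑_{e ∈ S} e) / a`,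
and for the given `S` we have `|S| = k + 1` while `∑_{e ∈ S} e ≤ 1 + ∑_{i < k} 2^(2^i) ≤ 2^(2^k) = a`.
-/

lemma one_sub_two_mul_le_pow_two_mul {t : ℝ} (ht : -1 ≤ t) (e : ℕ) :
    1 - 2 * (1 - t) * e ≤ t ^ (2 * e) := by
  have h := one_add_mul_le_pow (a := t - 1) (by linarith) (2 * e)
  rw [add_sub_cancel] at h
  push_cast at h
  linarith

lemma card_sub_le_gS (S : Finset ℕ) {t : ℝ} (ht : -1 ≤ t) :
    (#S : ℝ) - 2 * (1 - t) * ∑ e ∈ S, (e : ℝ) ≤ gS S t := by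
  calc (#S : ℝ) - 2 * (1 - t) * ∑ e ∈ S, (e : ℝ) = ∑ e ∈ S, (1 - 2 * (1 - t) * e) := by
        rw [sum_sub_distrib, ← mul_sum]; simp
    _ ≤ gS S t := sum_le_sum fun e _ => one_sub_two_mul_le_pow_two_mul ht e

lemma sum_range_two_pow_two_pow_lt (k : ℕ) : ∑ i ∈ range k, 2 ^ 2 ^ i < 2 ^ 2 ^ k := by
  induction k with
  | zero => simp
  | succ k ih =>
    have h2 : 2 ≤ 2 ^ 2 ^ k := Nat.le_self_pow (by positivity) 2
    calc ∑ i ∈ range (k + 1), 2 ^ 2 ^ i = ∑ i ∈ range k, 2 ^ 2 ^ i + 2 ^ 2 ^ k := sum_range_succ ..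
      _ < 2 * 2 ^ 2 ^ k := by omega
      _ ≤ 2 ^ 2 ^ k * 2 ^ 2 ^ k := Nat.mul_le_mul_right _ h2
      _ = 2 ^ 2 ^ (k + 1) := by rw [← pow_add, pow_succ, mul_two]

def doubleExpSet (k : ℕ) : Finset ℕ := {0, 1} ∪ (Icc 1 (k - 1)).image (fun i => 2 ^ 2 ^ i)

lemma two_pow_two_pow_injective : Function.Injective (fun i : ℕ => 2 ^ 2 ^ i) :=
  (Nat.pow_right_injective le_rfl).comp (Nat.pow_right_injective le_rfl)

lemma disjoint_doubleExpSet (k : ℕ) :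
    Disjoint ({0, 1} : Finset ℕ) ((Icc 1 (k - 1)).image (fun i => 2 ^ 2 ^ i)) := by
  rw [disjoint_left]
  intro x hx hx'
  obtain ⟨i, hi, rfl⟩ := mem_image.mp hx'
  have h4 : 2 ^ 2 ^ 1 ≤ 2 ^ 2 ^ i :=
    Nat.pow_le_pow_right two_pos (Nat.pow_le_pow_right two_pos (mem_Icc.mp hi).1)
  simp only [mem_insert, mem_singleton] at hx
  omega

lemma card_doubleExpSet {k : ℕ} (hk : 1 ≤ k) : #(doubleExpSet k) = k + 1 := by
  rw [doubleExpSet, card_union_of_disjoint (disjoint_doubleExpSet k),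
    card_image_of_injective _ two_pow_two_pow_injective]
  simp only [mem_singleton, zero_ne_one, not_false_eq_true, card_insert_of_notMem,
    card_singleton, Nat.card_Icc]
  omega

lemma sum_doubleExpSet_le (k : ℕ) : ∑ e ∈ doubleExpSet k, e ≤ 2 ^ 2 ^ k := by
  have hsub : Icc 1 (k - 1) ⊆ range k := fun i hi => by
    simp only [mem_Icc, mem_range] at hi ⊢; omega
  calc ∑ e ∈ doubleExpSet k, e = 1 + ∑ i ∈ Icc 1 (k - 1), 2 ^ 2 ^ i := by
        rw [doubleExpSet, sum_union (disjoint_doubleExpSet k),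
          sum_image fun x _ y _ h => two_pow_two_pow_injective h]
        simp
    _ ≤ 1 + ∑ i ∈ range k, 2 ^ 2 ^ i := by gcongr
    _ ≤ 2 ^ 2 ^ k := by have := sum_range_two_pow_two_pow_lt k; omega

theorem stmt14 :
    ∃ K : ℕ, ∀ k : ℕ, K ≤ k →
      gS ({0, 1} ∪ (Finset.Icc 1 (k - 1)).image (fun i => 2 ^ (2 ^ i)))
          (1 - 1 / (2 * ((2 : ℝ) ^ (2 ^ k)))) ≥ (k : ℝ) := by
  refine ⟨1, fun k hk => ?_⟩
  have hsum : ∑ e ∈ doubleExpSet k, (e : ℝ) ≤ (2 : ℝ) ^ 2 ^ k := by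
    simpa using (Nat.cast_le (α := ℝ)).mpr (sum_doubleExpSet_le k)
  set a : ℝ := 2 ^ 2 ^ k
  have ha : 1 ≤ a := one_le_pow₀ one_le_two
  have ht : -1 ≤ 1 - 1 / (2 * a) := by
    have : 1 / (2 * a) ≤ 1 := by rw [div_le_one (by positivity)]; linarith
    linarith
  have hbound := card_sub_le_gS (doubleExpSet k) ht
  have herr : 2 * (1 - (1 - 1 / (2 * a))) * ∑ e ∈ doubleExpSet k, (e : ℝ) ≤ 1 := by
    rw [show 2 * (1 - (1 - 1 / (2 * a))) = a⁻¹ by field_simp; ring]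
    exact inv_mul_le_one_of_le₀ hsum (by positivity)
  rw [card_doubleExpSet hk, Nat.cast_add_one] at hbound
  exact le_trans (by linarith) hbound
end

section
/- Let t > 0 and let g₁, g₂ : ℝ → ℝ be twice differentiable and positive on a neighborhood of t. Then 𝓘(g₁ + g₂)(t) = (g₁(t)/(g₁(t)+g₂(t)))·𝓘(g₁)(t) + (g₂(t)/(g₁(t)+g₂(t)))·𝓘(g₂)(t) + (1/(g₁(t)·g₂(t)))·((g₁(t)·(deriv g₂ t) − g₂(t)·(deriv g₁ t))/(g₁(t)+g₂(t)))². -/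
open Real

/-! Expanding `(g'/g)'` by the quotient rule, and using that the second derivative of
`g₁ + g₂` at `t` is `g₁'' + g₂''` (the first derivatives agree near `t`), turns both sides into
rational functions of `gᵢ, gᵢ', gᵢ''` at `t`; the identity is then pure algebra. -/

open Filter Topology

section

variable {g g₁ g₂ : ℝ → ℝ} {t : ℝ}

theorem IEK_eq (hg : DifferentiableAt ℝ g t) (hg' : DifferentiableAt ℝ (deriv g) t)
    (h0 : g t ≠ 0) :
    IEK g t = (deriv (deriv g) t * g t - deriv g t ^ 2) / g t ^ 2 + deriv g t / (t * g t) := by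
  rw [IEK, deriv_fun_div hg' hg h0]
  ring

theorem deriv_fun_add_eventuallyEq
    (h : ∀ᶠ s in 𝓝 t, DifferentiableAt ℝ g₁ s ∧ DifferentiableAt ℝ g₂ s) :
    deriv (fun s => g₁ s + g₂ s) =ᶠ[𝓝 t] fun s => deriv g₁ s + deriv g₂ s := by
  filter_upwards [h] with s hs
  exact deriv_fun_add hs.1 hs.2

theorem hasDerivAt_deriv_fun_add
    (h : ∀ᶠ s in 𝓝 t, DifferentiableAt ℝ g₁ s ∧ DifferentiableAt ℝ g₂ s)
    (h₁ : DifferentiableAt ℝ (deriv g₁) t) (h₂ : DifferentiableAt ℝ (deriv g₂) t) :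
    HasDerivAt (deriv fun s => g₁ s + g₂ s) (deriv (deriv g₁) t + deriv (deriv g₂) t) t :=
  (h₁.hasDerivAt.add h₂.hasDerivAt).congr_of_eventuallyEq (deriv_fun_add_eventuallyEq h)

end

theorem stmt19_general (t : ℝ) (g₁ g₂ : ℝ → ℝ)
    (h₁ : ∀ᶠ s in nhds t, DifferentiableAt ℝ g₁ s ∧ DifferentiableAt ℝ (deriv g₁) s ∧ 0 < g₁ s)
    (h₂ : ∀ᶠ s in nhds t, DifferentiableAt ℝ g₂ s ∧ DifferentiableAt ℝ (deriv g₂) s ∧ 0 < g₂ s) :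
    IEK (fun s => g₁ s + g₂ s) t =
      (g₁ t / (g₁ t + g₂ t)) * IEK g₁ t + (g₂ t / (g₁ t + g₂ t)) * IEK g₂ t +
        (1 / (g₁ t * g₂ t)) *
          ((g₁ t * deriv g₂ t - g₂ t * deriv g₁ t) / (g₁ t + g₂ t)) ^ 2 := by
  obtain ⟨hd₁, hd₁', hpos₁⟩ := h₁.self_of_nhds
  obtain ⟨hd₂, hd₂', hpos₂⟩ := h₂.self_of_nhds
  have hdiff : ∀ᶠ s in 𝓝 t, DifferentiableAt ℝ g₁ s ∧ DifferentiableAt ℝ g₂ s := by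
    filter_upwards [h₁, h₂] with s hs₁ hs₂ using ⟨hs₁.1, hs₂.1⟩
  have hsum'' := hasDerivAt_deriv_fun_add hdiff hd₁' hd₂'
  rw [IEK_eq (hd₁.fun_add hd₂) hsum''.differentiableAt (by positivity), hsum''.deriv,
    deriv_fun_add hd₁ hd₂, IEK_eq hd₁ hd₁' hpos₁.ne', IEK_eq hd₂ hd₂' hpos₂.ne']
  field_simp
  ring

theorem stmt19 (t : ℝ) (ht : 0 < t) (g₁ g₂ : ℝ → ℝ)
    (h₁ : ∀ᶠ s in nhds t, DifferentiableAt ℝ g₁ s ∧ DifferentiableAt ℝ (deriv g₁) s ∧ 0 < g₁ s)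
    (h₂ : ∀ᶠ s in nhds t, DifferentiableAt ℝ g₂ s ∧ DifferentiableAt ℝ (deriv g₂) s ∧ 0 < g₂ s) :
    IEK (fun s => g₁ s + g₂ s) t =
      (g₁ t / (g₁ t + g₂ t)) * IEK g₁ t + (g₂ t / (g₁ t + g₂ t)) * IEK g₂ t +
        (1 / (g₁ t * g₂ t)) *
          ((g₁ t * deriv g₂ t - g₂ t * deriv g₁ t) / (g₁ t + g₂ t)) ^ 2 :=
  stmt19_general t g₁ g₂ h₁ h₂
end
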